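/- Let 0 < s < 1 and for x > 0 define M₁(s, x) := ((1 − s + s x²)/x) · erf( x √s / √(2(1 − s)) ) + √(2 s (1 − s) / π) · exp( − s x² / (2(1 − s)) ). Then ∫₀^∞ x² · M₁(s, x) · exp(-x²/2) dx = 2 √s. -/

import Mathlib

/-!
With `σ = √(2(1 - s))`, `a = √s / σ` and `r = 1 / σ`, so that `a² + 1/2 = r²`,
the integrand splits as
`(1 - s) x e^{-x²/2} erf(a x) + s x³ e^{-x²/2} erf(a x) + (√s σ / √π) x² e^{-r² x²}`.
Since `e^{-x²/2} erf'(a x)` is a multiple of `e^{-r² x²}`, each piece has an explicit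
antiderivative built from `e^{-x²/2} erf(a x)`, `x e^{-r² x²}` and `erf(r x)`; the three
integrals over `(0, ∞)` are `a / r`, `(a / r) (2 + 1 / (2r²))` and `√π / (4r³)`,
and they add up to `2√s`.
-/

open Real MeasureTheory Set

noncomputable def erf (z : ℝ) : ℝ := 2 / Real.sqrt π * ∫ u in (0:ℝ)..z, Real.exp (-u ^ 2)

/-- Mean of the Brownian meander at time `s` conditioned to equal `x` at time 1. -/
noncomputable def M1 (s x : ℝ) : ℝ :=
  (1 - s + s * x ^ 2) / x * erf (x * Real.sqrt s / Real.sqrt (2 * (1 - s))) +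
    Real.sqrt (2 * s * (1 - s) / π) * Real.exp (-(s * x ^ 2) / (2 * (1 - s)))

open Filter Topology

lemma erf_zero : erf 0 = 0 := by simp [erf]

lemma erf_neg (z : ℝ) : erf (-z) = -erf z := by
  have h := intervalIntegral.integral_comp_neg (a := 0) (b := z) fun u => exp (-u ^ 2)
  simp only [neg_sq, neg_zero] at h
  rw [erf, erf, h, intervalIntegral.integral_symm, mul_neg]

lemma hasDerivAt_erf (z : ℝ) : HasDerivAt erf (2 / √π * exp (-z ^ 2)) z := by
  have hc : Continuous fun u : ℝ => exp (-u ^ 2) := by fun_prop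
  exact (intervalIntegral.integral_hasDerivAt_right (hc.intervalIntegrable _ _)
    hc.aestronglyMeasurable.stronglyMeasurableAtFilter hc.continuousAt).const_mul _

lemma continuous_erf : Continuous erf :=
  continuous_iff_continuousAt.2 fun z => (hasDerivAt_erf z).continuousAt

lemma monotone_erf : Monotone erf :=
  monotone_of_hasDerivAt_nonneg hasDerivAt_erf fun _ => by positivity

lemma tendsto_erf_atTop : Tendsto erf atTop (𝓝 1) := by
  have hint : IntegrableOn (fun u : ℝ => exp (-u ^ 2)) (Ioi 0) := by
    simpa using (integrable_exp_neg_mul_sq one_pos).integrableOn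
  have h := (intervalIntegral_tendsto_integral_Ioi 0 hint tendsto_id).const_mul (2 / √π)
  have hval : 2 / √π * ∫ u in Ioi (0:ℝ), exp (-u ^ 2) = 1 := by
    simp only [← neg_one_mul (_ ^ 2), integral_gaussian_Ioi, div_one]
    field_simp
  rwa [hval] at h

lemma abs_erf_le_one (z : ℝ) : |erf z| ≤ 1 := by
  have hle : ∀ z, erf z ≤ 1 := fun z => monotone_erf.ge_of_tendsto tendsto_erf_atTop z
  refine abs_le.2 ⟨?_, hle z⟩
  linarith [erf_neg z ▸ hle (-z)]

lemma integrableOn_pow_mul_exp_neg_mul_sq (n : ℕ) {b : ℝ} (hb : 0 < b) :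
    IntegrableOn (fun x : ℝ => x ^ n * exp (-b * x ^ 2)) (Ioi 0) := by
  simpa using integrableOn_rpow_mul_exp_neg_mul_sq hb (s := n)
    (by linarith [n.cast_nonneg (α := ℝ)])

lemma tendsto_pow_mul_exp_neg_mul_sq_atTop (n : ℕ) {b : ℝ} (hb : 0 < b) :
    Tendsto (fun x : ℝ => x ^ n * exp (-b * x ^ 2)) atTop (𝓝 0) := by
  refine ((rpow_mul_exp_neg_mul_sq_isLittleO_exp_neg hb n).tendsto_zero_of_tendsto
    (tendsto_exp_atBot.comp <| tendsto_id.const_mul_atTop_of_neg (by norm_num))).congr' ?_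
  filter_upwards [eventually_gt_atTop 0] with x hx
  rw [rpow_natCast]

lemma exp_neg_sq_div_two_eq (x : ℝ) : exp (-x ^ 2 / 2) = exp (-(1 / 2) * x ^ 2) := by
  ring_nf

lemma integrableOn_pow_mul_exp_mul_erf (n : ℕ) (a : ℝ) :
    IntegrableOn (fun x : ℝ => x ^ n * exp (-x ^ 2 / 2) * erf (a * x)) (Ioi 0) := by
  simp only [exp_neg_sq_div_two_eq]
  exact (integrableOn_pow_mul_exp_neg_mul_sq n one_half_pos).mul_bdd (c := 1)
    (continuous_erf.comp (continuous_const_mul a)).aestronglyMeasurable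
    (Eventually.of_forall fun x => abs_erf_le_one (a * x))

lemma tendsto_pow_mul_exp_mul_erf_atTop (n : ℕ) (a : ℝ) :
    Tendsto (fun x : ℝ => x ^ n * exp (-x ^ 2 / 2) * erf (a * x)) atTop (𝓝 0) := by
  simp only [exp_neg_sq_div_two_eq]
  exact (tendsto_pow_mul_exp_neg_mul_sq_atTop n one_half_pos).zero_mul_isBoundedUnder_le
    (isBoundedUnder_of ⟨1, fun x => abs_erf_le_one (a * x)⟩)

lemma tendsto_erf_const_mul_atTop {r : ℝ} (hr : 0 < r) :
    Tendsto (fun x => erf (r * x)) atTop (𝓝 1) :=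
  tendsto_erf_atTop.comp (tendsto_id.const_mul_atTop hr)

lemma hasDerivAt_erf_const_mul (a x : ℝ) :
    HasDerivAt (fun x => erf (a * x)) (2 / √π * exp (-a ^ 2 * x ^ 2) * a) x := by
  refine ((hasDerivAt_erf (a * x)).comp x ((hasDerivAt_id x).const_mul a)).congr_deriv ?_
  simp only [mul_one, mul_pow, neg_mul]

lemma hasDerivAt_exp_neg_mul_sq (b x : ℝ) :
    HasDerivAt (fun x => exp (-b * x ^ 2)) (-2 * b * x * exp (-b * x ^ 2)) x := by
  refine ((hasDerivAt_pow 2 x).const_mul (-b)).exp.congr_deriv ?_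
  norm_num
  ring

lemma hasDerivAt_exp_neg_sq_div_two (x : ℝ) :
    HasDerivAt (fun x => exp (-x ^ 2 / 2)) (-x * exp (-x ^ 2 / 2)) x := by
  refine ((hasDerivAt_pow 2 x).neg.div_const 2).exp.congr_deriv ?_
  norm_num
  ring

lemma exp_neg_sq_div_two_mul_exp_neg_mul_sq {a r : ℝ} (har : a ^ 2 + 1 / 2 = r ^ 2) (x : ℝ) :
    exp (-x ^ 2 / 2) * exp (-a ^ 2 * x ^ 2) = exp (-r ^ 2 * x ^ 2) := by
  rw [← exp_add, ← har]
  ring_nf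

section ErfMoments

variable {a r : ℝ}

theorem integral_mul_exp_mul_erf (hr : 0 < r) (har : a ^ 2 + 1 / 2 = r ^ 2) :
    ∫ x in Ioi 0, x * exp (-x ^ 2 / 2) * erf (a * x) = a / r := by
  have hderiv : ∀ x ∈ Ici (0 : ℝ), HasDerivAt
      (fun x => -(exp (-x ^ 2 / 2) * erf (a * x)) + a / r * erf (r * x))
      (x * exp (-x ^ 2 / 2) * erf (a * x)) x := by
    intro x _
    refine (((hasDerivAt_exp_neg_sq_div_two x).mul (hasDerivAt_erf_const_mul a x)).neg.add
      ((hasDerivAt_erf_const_mul r x).const_mul (a / r))).congr_deriv ?_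
    rw [← exp_neg_sq_div_two_mul_exp_neg_mul_sq har]
    field_simp
    ring
  have hlim : Tendsto (fun x => -(exp (-x ^ 2 / 2) * erf (a * x)) + a / r * erf (r * x))
      atTop (𝓝 (a / r)) := by
    simpa using ((tendsto_pow_mul_exp_mul_erf_atTop 0 a).neg.add
      ((tendsto_erf_const_mul_atTop hr).const_mul (a / r)))
  simpa [erf_zero] using integral_Ioi_of_hasDerivAt_of_tendsto' hderiv
    (by simpa using integrableOn_pow_mul_exp_mul_erf 1 a) hlim

theorem integral_sq_mul_exp_neg_mul_sq (hr : 0 < r) :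
    ∫ x in Ioi 0, x ^ 2 * exp (-r ^ 2 * x ^ 2) = √π / (4 * r ^ 3) := by
  have hderiv : ∀ x ∈ Ici (0 : ℝ), HasDerivAt
      (fun x => -(1 / (2 * r ^ 2)) * (x * exp (-r ^ 2 * x ^ 2)) + √π / (4 * r ^ 3) * erf (r * x))
      (x ^ 2 * exp (-r ^ 2 * x ^ 2)) x := by
    intro x _
    refine ((((hasDerivAt_id' x).mul (hasDerivAt_exp_neg_mul_sq (r ^ 2) x)).const_mul _).add
      ((hasDerivAt_erf_const_mul r x).const_mul _)).congr_deriv ?_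
    field_simp
    ring
  have hlim : Tendsto
      (fun x => -(1 / (2 * r ^ 2)) * (x * exp (-r ^ 2 * x ^ 2)) + √π / (4 * r ^ 3) * erf (r * x))
      atTop (𝓝 (√π / (4 * r ^ 3))) := by
    simpa only [pow_one, mul_zero, mul_one, zero_add] using
      ((tendsto_pow_mul_exp_neg_mul_sq_atTop 1 (pow_pos hr 2)).const_mul
      (-(1 / (2 * r ^ 2)))).add
      ((tendsto_erf_const_mul_atTop hr).const_mul (√π / (4 * r ^ 3)))
  simpa [erf_zero] using integral_Ioi_of_hasDerivAt_of_tendsto' hderiv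
    (integrableOn_pow_mul_exp_neg_mul_sq 2 (by positivity)) hlim

theorem integral_pow_three_mul_exp_mul_erf (hr : 0 < r) (har : a ^ 2 + 1 / 2 = r ^ 2) :
    ∫ x in Ioi 0, x ^ 3 * exp (-x ^ 2 / 2) * erf (a * x) = a / r * (2 + 1 / (2 * r ^ 2)) := by
  have hderiv : ∀ x ∈ Ici (0 : ℝ), HasDerivAt
      (fun x => -((x ^ 2 + 2) * exp (-x ^ 2 / 2) * erf (a * x))
        - a / (√π * r ^ 2) * (x * exp (-r ^ 2 * x ^ 2))
        + a / r * (2 + 1 / (2 * r ^ 2)) * erf (r * x))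
      (x ^ 3 * exp (-x ^ 2 / 2) * erf (a * x)) x := by
    intro x _
    refine (((((hasDerivAt_pow 2 x).add_const 2).mul (hasDerivAt_exp_neg_sq_div_two x)).mul
      (hasDerivAt_erf_const_mul a x)).neg.sub
      (((hasDerivAt_id' x).mul (hasDerivAt_exp_neg_mul_sq (r ^ 2) x)).const_mul _) |>.add
      ((hasDerivAt_erf_const_mul r x).const_mul _)).congr_deriv ?_
    rw [← exp_neg_sq_div_two_mul_exp_neg_mul_sq har]
    simp only [Pi.mul_apply]
    field_simp
    ring
  have hlim : Tendsto
      (fun x => -((x ^ 2 + 2) * exp (-x ^ 2 / 2) * erf (a * x))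
        - a / (√π * r ^ 2) * (x * exp (-r ^ 2 * x ^ 2))
        + a / r * (2 + 1 / (2 * r ^ 2)) * erf (r * x))
      atTop (𝓝 (a / r * (2 + 1 / (2 * r ^ 2)))) := by
    have hpoly :
        Tendsto (fun x => (x ^ 2 + 2) * exp (-x ^ 2 / 2) * erf (a * x)) atTop (𝓝 0) := by
      simpa [add_mul, mul_assoc] using (tendsto_pow_mul_exp_mul_erf_atTop 2 a).add
        ((tendsto_pow_mul_exp_mul_erf_atTop 0 a).const_mul 2)
    simpa only [pow_one, mul_zero, mul_one, neg_zero, sub_zero, zero_add] using (hpoly.neg.sub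
      ((tendsto_pow_mul_exp_neg_mul_sq_atTop 1 (pow_pos hr 2)).const_mul (a / (√π * r ^ 2)))).add
      ((tendsto_erf_const_mul_atTop hr).const_mul (a / r * (2 + 1 / (2 * r ^ 2))))
  simpa [erf_zero] using integral_Ioi_of_hasDerivAt_of_tendsto' hderiv
    (integrableOn_pow_mul_exp_mul_erf 3 a) hlim

end ErfMoments

lemma sq_mul_M1_mul_exp_eq {s x : ℝ} (hs : 0 ≤ s) (hs1 : s < 1) (hx : x ≠ 0) :
    x ^ 2 * M1 s x * exp (-x ^ 2 / 2)
      = (1 - s) * (x * exp (-x ^ 2 / 2) * erf (√s / √(2 * (1 - s)) * x))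
        + s * (x ^ 3 * exp (-x ^ 2 / 2) * erf (√s / √(2 * (1 - s)) * x))
        + √s * √(2 * (1 - s)) / √π
          * (x ^ 2 * exp (-(√(2 * (1 - s)))⁻¹ ^ 2 * x ^ 2)) := by
  have h1s : 1 - s ≠ 0 := by linarith
  have hcoef : √(2 * s * (1 - s) / π) = √s * √(2 * (1 - s)) / √π := by
    rw [mul_right_comm, sqrt_div' _ pi_pos.le, sqrt_mul' _ hs, mul_comm (√(2 * (1 - s)))]
  have hexp : exp (-(s * x ^ 2) / (2 * (1 - s))) * exp (-x ^ 2 / 2)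
      = exp (-(√(2 * (1 - s)))⁻¹ ^ 2 * x ^ 2) := by
    rw [← exp_add, inv_pow, sq_sqrt (by linarith)]
    congr 1
    field_simp
    ring
  rw [M1, hcoef, mul_div_right_comm, mul_comm x, ← hexp]
  field_simp

theorem stmt11 (s : ℝ) (hs : 0 < s) (hs1 : s < 1) :
    ∫ x in Ioi (0 : ℝ), x ^ 2 * M1 s x * Real.exp (-x ^ 2 / 2) = 2 * Real.sqrt s := by
  rw [setIntegral_congr_fun measurableSet_Ioi
    fun x hx => sq_mul_M1_mul_exp_eq hs.le hs1 (ne_of_gt hx)]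
  set σ := √(2 * (1 - s))
  have hσ : 0 < σ := sqrt_pos.2 (by linarith)
  have hσ2 : σ ^ 2 = 2 * (1 - s) := sq_sqrt (by linarith)
  have hr : 0 < σ⁻¹ := inv_pos.2 hσ
  have har : (√s / σ) ^ 2 + 1 / 2 = σ⁻¹ ^ 2 := by
    rw [div_pow, sq_sqrt hs.le, inv_pow]
    field_simp
    linarith
  have hI₁ : IntegrableOn (fun x => x * exp (-x ^ 2 / 2) * erf (√s / σ * x)) (Ioi 0) := by
    simpa using integrableOn_pow_mul_exp_mul_erf 1 (√s / σ)
  have hI₃ := integrableOn_pow_mul_exp_mul_erf 3 (√s / σ)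
  have hG := integrableOn_pow_mul_exp_neg_mul_sq 2 (pow_pos hr 2)
  rw [integral_add ?_ (hG.const_mul _), integral_add (hI₁.const_mul _) (hI₃.const_mul _),
    integral_const_mul, integral_const_mul, integral_const_mul,
    integral_mul_exp_mul_erf hr har, integral_pow_three_mul_exp_mul_erf hr har,
    integral_sq_mul_exp_neg_mul_sq hr]
  · field_simp
    linear_combination (2 * σ ^ 2 + 4) * hσ2
  · exact (hI₁.const_mul _).add (hI₃.const_mul _)
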